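/- arXiv:1707.04385 — 4 statements merged into one kernel-verified Lean document; each statement's English description precedes it below -/
import Mathlib

section
/- Let P and Q be generalized exponential family distributions with respective natural parameters θ_p, θ_q ∈ ℝ^d, sufficient statistics φ_p, φ_q, and differentiable convex cumulants C_p, C_q, so that P(x) = exp(⟨φ_p(x), θ_p⟩ − C_p(θ_p)) and Q(x) = exp(⟨φ_q(x), θ_q⟩ − C_q(θ_q)). Then KL(P‖Q) = D_{C_p}(θ_q‖θ_p) + A, where D_{C_p}(θ_q‖θ_p) := C_p(θ_q) − C_p(θ_p) − ⟨θ_q − θ_p, ∇C_p(θ_p)⟩ is a Bregman divergence in the parameters and A := C_q(θ_q) − C_p(θ_q) − ⟨E_P[φ_q] − E_P[φ_p], θ_q⟩ is a divergence between the cumulants. -/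
open MeasureTheory
open scoped RealInnerProductSpace

/-- for two (possibly different) exponential families, the KL divergence
decomposes as a Bregman divergence between natural parameters plus a divergence `A`
between the cumulants. -/
theorem KL_generalized_exponential_family_decomposition
    {X : Type*} [MeasurableSpace X] (μ : Measure X) {d : ℕ}
    (φp φq : X → EuclideanSpace ℝ (Fin d))
    (Cp Cq : EuclideanSpace ℝ (Fin d) → ℝ)
    (hCpconv : ConvexOn ℝ Set.univ Cp) (hCqconv : ConvexOn ℝ Set.univ Cq)
    (hCpdiff : Differentiable ℝ Cp) (hCqdiff : Differentiable ℝ Cq)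
    (θp θq : EuclideanSpace ℝ (Fin d))
    (P Q : X → ℝ)
    (hP : ∀ x, P x = Real.exp (⟪φp x, θp⟫ - Cp θp))
    (hQ : ∀ x, Q x = Real.exp (⟪φq x, θq⟫ - Cq θq))
    (hP1 : ∫ x, P x ∂μ = 1) (hQ1 : ∫ x, Q x ∂μ = 1)
    (hmean : gradient Cp θp = ∫ x, P x • φp x ∂μ)
    (hKLint : Integrable (fun x => P x * Real.log (P x / Q x)) μ)
    (hφpint : Integrable (fun x => P x • φp x) μ)
    (hφqint : Integrable (fun x => P x • φq x) μ) :
    ∫ x, P x * Real.log (P x / Q x) ∂μ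
      = (Cp θq - Cp θp - ⟪θq - θp, gradient Cp θp⟫)
        + (Cq θq - Cp θq
            - ⟪(∫ x, P x • φq x ∂μ) - (∫ x, P x • φp x ∂μ), θq⟫) := by
  have hPint : Integrable P μ := by
    by_contra h
    rw [integral_undef h] at hP1
    norm_num at hP1
  have heq : ∀ x, P x * Real.log (P x / Q x)
      = ⟪θp, P x • φp x⟫ - ⟪θq, P x • φq x⟫ + (Cq θq - Cp θp) * P x := by
    intro x
    have h1 : ⟪θp, P x • φp x⟫ = P x * ⟪φp x, θp⟫ := by
      rw [real_inner_smul_right, real_inner_comm]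
    have h2 : ⟪θq, P x • φq x⟫ = P x * ⟪φq x, θq⟫ := by
      rw [real_inner_smul_right, real_inner_comm]
    rw [h1, h2, hP x, hQ x, ← Real.exp_sub, Real.log_exp]
    ring
  have hi1 : Integrable (fun x => ⟪θp, P x • φp x⟫) μ := hφpint.const_inner θp
  have hi2 : Integrable (fun x => ⟪θq, P x • φq x⟫) μ := hφqint.const_inner θq
  have hi3 : Integrable (fun x => (Cq θq - Cp θp) * P x) μ := hPint.const_mul _
  calc ∫ x, P x * Real.log (P x / Q x) ∂μ
      = ∫ x, (⟪θp, P x • φp x⟫ - ⟪θq, P x • φq x⟫ + (Cq θq - Cp θp) * P x) ∂μ := by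
        exact integral_congr_ae (Filter.Eventually.of_forall heq)
    _ = (∫ x, (⟪θp, P x • φp x⟫ - ⟪θq, P x • φq x⟫) ∂μ) + ∫ x, (Cq θq - Cp θp) * P x ∂μ :=
        integral_add (hi1.sub hi2) hi3
    _ = ((∫ x, ⟪θp, P x • φp x⟫ ∂μ) - ∫ x, ⟪θq, P x • φq x⟫ ∂μ) + (Cq θq - Cp θp) * ∫ x, P x ∂μ := by
        rw [integral_sub hi1 hi2, integral_const_mul]
    _ = ⟪θp, ∫ x, P x • φp x ∂μ⟫ - ⟪θq, ∫ x, P x • φq x ∂μ⟫ + (Cq θq - Cp θp) := by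
        rw [integral_inner hφpint, integral_inner hφqint, hP1, mul_one]
    _ = _ := by
        rw [hmean, inner_sub_left, inner_sub_left,
          real_inner_comm (∫ x, P x • φq x ∂μ) θq, real_inner_comm (∫ x, P x • φp x ∂μ) θq]
        ring
end

section
/- Let P be a probability density on X w.r.t. μ in a χ-exponential family, P(x) = exp_χ(⟨φ(x),θ⟩ − C(θ)), with escort density P̃ := χ(P)/Z where Z := ∫ χ(P(x)) dμ(x) < ∞. Let Q be another member of the same χ-exponential family with coordinate ϑ and escort Q̃. Then E_{X∼Q̃}[log_χ(Q(X)) − log_χ(P(X))] = KL_{χ_{Q̃}}(Q̃‖P) − KL_{χ_{Q̃}}(Q̃‖Q), where KL_{χ_f}(A‖B) := E_{X∼A}[−log_{χ_{f(X)}}(B(X)/A(X))] and χ_p(t) := (1/p)χ(tp). -/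
open MeasureTheory
open scoped RealInnerProductSpace

/-- The χ-logarithm `log_χ(z) = ∫₁^z dt/χ(t)`. -/
noncomputable def logchi (χ : ℝ → ℝ) (z : ℝ) : ℝ := ∫ t in (1:ℝ)..z, 1 / χ t

/-- The rescaled signature `χ_p(t) := (1/p)·χ(t·p)`. -/
noncomputable def chiScaled (χ : ℝ → ℝ) (p : ℝ) : ℝ → ℝ := fun t => (1 / p) * χ (t * p)

/-- The generalized KL_χ divergence with observation-dependent rescaling:
`KL_{χ_f}(A‖B) := E_{X∼A}[−log_{χ_{f(X)}}(B(X)/A(X))]`. -/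
noncomputable def KLchiF {X : Type*} [MeasurableSpace X] (μ : Measure X)
    (χ : ℝ → ℝ) (f A B : X → ℝ) : ℝ :=
  ∫ x, A x * (- logchi (chiScaled χ (f x)) (B x / A x)) ∂μ

/-- Key pointwise identity: `log_{χ_s}(a/s) = log_χ(a) − log_χ(s)` for `a, s > 0`. -/
lemma logchi_scaled_eq (χ : ℝ → ℝ) (hχmono : MonotoneOn χ (Set.Ioi 0))
    (hχpos : ∀ t > (0:ℝ), 0 < χ t) {a s : ℝ} (ha : 0 < a) (hs : 0 < s) :
    logchi (chiScaled χ s) (a / s) = logchi χ a - logchi χ s := by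
  have hint : ∀ {u v : ℝ}, 0 < u → 0 < v →
      IntervalIntegrable (fun t => 1 / χ t) MeasureTheory.volume u v := by
    intro u v hu hv
    apply AntitoneOn.intervalIntegrable
    intro x hx y hy hxy
    have hx0 : 0 < x := lt_of_lt_of_le (lt_min hu hv) (Set.mem_uIcc.mp hx |>.elim
      (fun h => le_trans (min_le_left _ _) h.1) (fun h => le_trans (min_le_right _ _) h.1))
    have hy0 : 0 < y := lt_of_lt_of_le (lt_min hu hv) (Set.mem_uIcc.mp hy |>.elim
      (fun h => le_trans (min_le_left _ _) h.1) (fun h => le_trans (min_le_right _ _) h.1))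
    have := hχmono (Set.mem_Ioi.mpr hx0) (Set.mem_Ioi.mpr hy0) hxy
    have hcx := hχpos x hx0
    have hcy := hχpos y hy0
    simp only [one_div]
    exact inv_anti₀ hcx this
  have h1 : logchi (chiScaled χ s) (a / s)
      = ∫ t in (1:ℝ)..(a / s), s * (fun u => 1 / χ u) (t * s) := by
    unfold logchi chiScaled
    congr 1
    ext t
    have : (0:ℝ) < s := hs
    field_simp
  rw [h1, intervalIntegral.integral_const_mul,
    intervalIntegral.integral_comp_mul_right (fun u => 1 / χ u) (ne_of_gt hs)]
  rw [smul_eq_mul, ← mul_assoc, mul_inv_cancel₀ (ne_of_gt hs), one_mul, one_mul,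
    div_mul_cancel₀ _ (ne_of_gt hs)]
  unfold logchi
  rw [← intervalIntegral.integral_interval_sub_left (hint one_pos ha) (hint one_pos hs)]

/-- for two members `P`, `Q` of the same χ-exponential family with
escort `Q̃ = χ(Q)/Z`, the escort expectation of `log_χ Q − log_χ P` equals
`KL_{χ_{Q̃}}(Q̃‖P) − KL_{χ_{Q̃}}(Q̃‖Q)`. -/
theorem escort_expectation_eq_KLchi_difference
    {X : Type*} [MeasurableSpace X] (μ : Measure X) {d : ℕ}
    (χ : ℝ → ℝ) (hχmono : MonotoneOn χ (Set.Ioi 0)) (hχpos : ∀ t > (0:ℝ), 0 < χ t)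
    (φ : X → EuclideanSpace ℝ (Fin d)) (C : EuclideanSpace ℝ (Fin d) → ℝ)
    (hCconv : ConvexOn ℝ Set.univ C)
    (θ ϑ : EuclideanSpace ℝ (Fin d))
    (P Q : X → ℝ) (hPpos : ∀ x, 0 < P x) (hQpos : ∀ x, 0 < Q x)
    -- membership in the χ-exponential family:  P = exp_χ(⟨φ,θ⟩ − C(θ)), etc.
    (hP : ∀ x, logchi χ (P x) = ⟪φ x, θ⟫ - C θ)
    (hQ : ∀ x, logchi χ (Q x) = ⟪φ x, ϑ⟫ - C ϑ)
    (hP1 : ∫ x, P x ∂μ = 1) (hQ1 : ∫ x, Q x ∂μ = 1)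
    (Z : ℝ) (hZ : Z = ∫ x, χ (Q x) ∂μ) (hZpos : 0 < Z)
    (hZfin : Integrable (fun x => χ (Q x)) μ)
    (Qesc : X → ℝ) (hQesc : ∀ x, Qesc x = χ (Q x) / Z)
    (hint1 : Integrable (fun x => Qesc x * (logchi χ (Q x) - logchi χ (P x))) μ)
    (hint2 : Integrable
      (fun x => Qesc x * (- logchi (chiScaled χ (Qesc x)) (P x / Qesc x))) μ)
    (hint3 : Integrable
      (fun x => Qesc x * (- logchi (chiScaled χ (Qesc x)) (Q x / Qesc x))) μ) :
    ∫ x, Qesc x * (logchi χ (Q x) - logchi χ (P x)) ∂μ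
      = KLchiF μ χ Qesc Qesc P - KLchiF μ χ Qesc Qesc Q := by
  unfold KLchiF
  rw [← integral_sub hint2 hint3]
  refine integral_congr_ae (Filter.Eventually.of_forall fun x => ?_)
  have hsx : 0 < Qesc x := by
    rw [hQesc]; exact div_pos (hχpos _ (hQpos x)) hZpos
  simp only [logchi_scaled_eq χ hχmono hχpos (hPpos x) hsx,
    logchi_scaled_eq χ hχmono hχpos (hQpos x) hsx]
  ring
end

section
/- Let γ ≥ 1 and let χ(z) := z for z ≤ γ and χ(z) := γ for z > γ (the signature of the (γ,γ)-ELU). Then log_χ(z) = log z for z ≤ γ and log_χ(z) = log γ + z/γ − 1 for z > γ; the escort normalizer Z := ∫χ(Q) dμ of any probability density Q satisfies Z ≤ 1; and the penalty J(Q) := E_{X∼Q̃}[log_χ(Q̃(X)) − log_χ(Q(X))], where Q̃ := χ(Q)/Z, satisfies J(Q) ≤ (log γ)/Z + (1−Z)/Z² + H*(Q)/Z with H*(Q) := E_{X∼Q}[max{0, −log Q(X)}]. -/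
open MeasureTheory

lemma min_intInt {γ : ℝ} (hγ : 1 ≤ γ) {a b : ℝ} (ha : 1 ≤ a) (hb : 1 ≤ b) :
    IntervalIntegrable (fun t => 1 / min t γ) MeasureTheory.volume a b := by
  apply ContinuousOn.intervalIntegrable
  apply ContinuousOn.div continuousOn_const
    ((continuous_id.min continuous_const).continuousOn)
  intro t ht
  have h1 : min a b ≤ t := ht.1
  have h2 : (0:ℝ) < min t γ := lt_of_lt_of_le one_pos (le_min (le_trans (le_min ha hb) h1) hγ)
  simpa using h2.ne'

lemma logchi_min_le {γ : ℝ} (hγ : 1 ≤ γ) {z : ℝ} (hz : 0 < z) (hzγ : z ≤ γ) :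
    logchi (fun z => min z γ) z = Real.log z := by
  unfold logchi
  have h1 : ∫ t in (1:ℝ)..z, 1 / min t γ = ∫ t in (1:ℝ)..z, 1 / t := by
    apply intervalIntegral.integral_congr
    intro t ht
    have h2 : t ≤ max 1 z := ht.2
    simp only [min_eq_left (le_trans h2 (max_le hγ hzγ))]
  rw [h1, integral_one_div (Set.notMem_uIcc_of_lt one_pos hz), div_one]

lemma logchi_min_gt {γ : ℝ} (hγ : 1 ≤ γ) {z : ℝ} (hz : γ < z) :
    logchi (fun z => min z γ) z = Real.log γ + z / γ - 1 := by
  have hγ0 : (0:ℝ) < γ := lt_of_lt_of_le one_pos hγ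
  unfold logchi
  rw [← intervalIntegral.integral_add_adjacent_intervals (b := γ)
    (min_intInt hγ le_rfl hγ) (min_intInt hγ hγ (hγ.trans hz.le))]
  have h1 : ∫ t in (1:ℝ)..γ, 1 / min t γ = Real.log γ := logchi_min_le hγ hγ0 le_rfl
  have h2 : ∫ t in γ..z, 1 / min t γ = (z - γ) * (1 / γ) := by
    rw [intervalIntegral.integral_congr (g := fun _ => 1/γ), intervalIntegral.integral_const,
      smul_eq_mul]
    intro t ht
    have h3 : γ ≤ t := (min_eq_left hz.le) ▸ ht.1
    simp only [min_eq_right h3]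
  rw [h1, h2]
  field_simp
  ring

/-- for the (γ,γ)-ELU signature `χ(z) = min{z, γ}` with `γ ≥ 1`:
the χ-logarithm has the displayed closed form, the escort normalizer satisfies
`Z ≤ 1`, and the penalty `J(Q)` is bounded by `log γ / Z + (1−Z)/Z² + H*(Q)/Z`. -/
theorem ELU_logchi_Z_and_penalty_bound
    {X : Type*} [MeasurableSpace X] (μ : Measure X)
    (γ : ℝ) (hγ : 1 ≤ γ)
    (Q : X → ℝ) (hQ0 : ∀ x, 0 < Q x)
    (hQ1 : ∫ x, Q x ∂μ = 1) (hQint : Integrable Q μ)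
    (Z : ℝ) (hZ : Z = ∫ x, min (Q x) γ ∂μ) (hZpos : 0 < Z)
    (hχint : Integrable (fun x => min (Q x) γ) μ)
    (Qesc : X → ℝ) (hQesc : ∀ x, Qesc x = min (Q x) γ / Z)
    (hJint : Integrable
      (fun x => Qesc x * (logchi (fun z => min z γ) (Qesc x)
                          - logchi (fun z => min z γ) (Q x))) μ)
    (hHint : Integrable (fun x => Q x * max 0 (- Real.log (Q x))) μ) :
    (∀ z : ℝ, 0 < z → z ≤ γ → logchi (fun z => min z γ) z = Real.log z) ∧
    (∀ z : ℝ, γ < z → logchi (fun z => min z γ) z = Real.log γ + z / γ - 1) ∧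
    Z ≤ 1 ∧
    ∫ x, Qesc x * (logchi (fun z => min z γ) (Qesc x)
                    - logchi (fun z => min z γ) (Q x)) ∂μ
      ≤ Real.log γ / Z + (1 - Z) / Z ^ 2
        + (∫ x, Q x * max 0 (- Real.log (Q x)) ∂μ) / Z := by
  have hγ0 : (0:ℝ) < γ := lt_of_lt_of_le one_pos hγ
  have hZ1 : Z ≤ 1 := by
    rw [hZ, ← hQ1]
    exact integral_mono hχint hQint fun x => min_le_left _ _
  refine ⟨fun z hz h => logchi_min_le hγ hz h, fun z h => logchi_min_gt hγ h, hZ1, ?_⟩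
  set L := logchi (fun z => min z γ) with hL
  have hub : ∀ z : ℝ, 0 < z → L z ≤ Real.log γ + z / γ - 1 := by
    intro z hz
    rcases le_or_gt z γ with h | h
    · rw [hL, logchi_min_le hγ hz h]
      have h2 := Real.log_le_sub_one_of_pos (div_pos hz hγ0)
      rw [Real.log_div hz.ne' hγ0.ne'] at h2
      linarith
    · rw [hL, logchi_min_gt hγ h]
  have hlb : ∀ z : ℝ, 0 < z → Real.log z ≤ L z := by
    intro z hz
    rcases le_or_gt z γ with h | h
    · rw [hL, logchi_min_le hγ hz h]
    · rw [hL, logchi_min_gt hγ h]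
      have h2 := Real.log_le_sub_one_of_pos (div_pos hz hγ0)
      rw [Real.log_div hz.ne' hγ0.ne'] at h2
      linarith
  have hQescEq : Qesc = fun x => min (Q x) γ / Z := funext hQesc
  have hQescInt : Integrable Qesc μ := by rw [hQescEq]; exact hχint.div_const Z
  have hQescOne : ∫ x, Qesc x ∂μ = 1 := by
    rw [hQescEq, integral_div, ← hZ, div_self hZpos.ne']
  have key : ∀ x, Qesc x * (L (Qesc x) - L (Q x)) ≤
      Qesc x * Real.log γ + Qesc x * ((1 - Z) / Z)
        + Q x * max 0 (- Real.log (Q x)) / Z := by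
    intro x
    have hq := hQ0 x
    have hmin : 0 < min (Q x) γ := lt_min hq hγ0
    have hqe : 0 < Qesc x := by rw [hQesc]; exact div_pos hmin hZpos
    have h1 : L (Qesc x) - L (Q x) ≤ Real.log γ + Qesc x / γ - 1 - Real.log (Q x) :=
      sub_le_sub (hub _ hqe) (hlb _ hq)
    have h2 : Qesc x * (L (Qesc x) - L (Q x)) ≤
        Qesc x * (Real.log γ + Qesc x / γ - 1 - Real.log (Q x)) :=
      mul_le_mul_of_nonneg_left h1 hqe.le
    have hqγ : Qesc x ≤ γ / Z := by
      rw [hQesc]; gcongr; exact min_le_right _ _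
    have hle : Qesc x / γ ≤ 1 / Z := by
      rw [div_le_div_iff₀ hγ0 hZpos]
      have h := mul_le_mul_of_nonneg_right hqγ hZpos.le
      rw [div_mul_cancel₀ _ hZpos.ne'] at h
      linarith
    have h3 : Qesc x * (Qesc x / γ) ≤ Qesc x * (1 / Z) :=
      mul_le_mul_of_nonneg_left hle hqe.le
    have h4 : - (Qesc x * Real.log (Q x)) ≤ Q x * max 0 (- Real.log (Q x)) / Z := by
      rcases le_or_gt 0 (Real.log (Q x)) with h | h
      · have ha : 0 ≤ Qesc x * Real.log (Q x) := mul_nonneg hqe.le h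
        have hb : 0 ≤ Q x * max 0 (- Real.log (Q x)) / Z := by positivity
        linarith
      · have hmax : max 0 (- Real.log (Q x)) = - Real.log (Q x) :=
          max_eq_right (by linarith)
        rw [hmax]
        have hqle : Qesc x ≤ Q x / Z := by
          rw [hQesc]; gcongr; exact min_le_left _ _
        have h5 := mul_le_mul_of_nonneg_right hqle (neg_nonneg.mpr h.le)
        calc - (Qesc x * Real.log (Q x)) = Qesc x * (- Real.log (Q x)) := by ring
          _ ≤ Q x / Z * (- Real.log (Q x)) := h5
          _ = Q x * (- Real.log (Q x)) / Z := by ring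
    have hZeq : (1 - Z) / Z = 1 / Z - 1 := by field_simp
    calc Qesc x * (L (Qesc x) - L (Q x))
        ≤ Qesc x * (Real.log γ + Qesc x / γ - 1 - Real.log (Q x)) := h2
      _ = Qesc x * Real.log γ + Qesc x * (Qesc x / γ) - Qesc x
            - Qesc x * Real.log (Q x) := by ring
      _ ≤ Qesc x * Real.log γ + Qesc x * (1 / Z) - Qesc x
            + Q x * max 0 (- Real.log (Q x)) / Z := by linarith
      _ = Qesc x * Real.log γ + Qesc x * ((1 - Z) / Z)
            + Q x * max 0 (- Real.log (Q x)) / Z := by rw [hZeq]; ring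
  have hgint : Integrable (fun x => Qesc x * Real.log γ + Qesc x * ((1 - Z) / Z)
      + Q x * max 0 (- Real.log (Q x)) / Z) μ :=
    ((hQescInt.mul_const _).add (hQescInt.mul_const _)).add (hHint.div_const _)
  have hmono := integral_mono hJint hgint key
  have hcalc : ∫ x, (Qesc x * Real.log γ + Qesc x * ((1 - Z) / Z)
      + Q x * max 0 (- Real.log (Q x)) / Z) ∂μ
      = Real.log γ + (1 - Z) / Z
        + (∫ x, Q x * max 0 (- Real.log (Q x)) ∂μ) / Z := by
    have i1 : Integrable (fun x => Qesc x * Real.log γ) μ := hQescInt.mul_const _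
    have i2 : Integrable (fun x => Qesc x * ((1 - Z) / Z)) μ := hQescInt.mul_const _
    have i3 : Integrable (fun x => Q x * max 0 (- Real.log (Q x)) / Z) μ := hHint.div_const _
    have i12 : Integrable (fun x => Qesc x * Real.log γ + Qesc x * ((1 - Z) / Z)) μ := i1.add i2
    rw [integral_add i12 i3, integral_add i1 i2,
      integral_mul_const, integral_mul_const, integral_div, hQescOne, one_mul, one_mul]
  rw [hcalc] at hmono
  have hlog : 0 ≤ Real.log γ := Real.log_nonneg hγ
  have h5 : Real.log γ ≤ Real.log γ / Z := by
    rw [le_div_iff₀ hZpos]; nlinarith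
  have h6 : (1 - Z) / Z ≤ (1 - Z) / Z ^ 2 := by
    rw [div_le_div_iff₀ hZpos (by positivity)]
    nlinarith [mul_nonneg (mul_nonneg (sub_nonneg.2 hZ1) hZpos.le) (sub_nonneg.2 hZ1)]
  linarith
end

section
/- For every ε ∈ [0,1] and every z ≥ 0, the GAN generator f(z) := z·log z − (1+z)·log(1+z) + 2·log 2 satisfies f(εz) − f(z) ≤ −log ε (with the convention 0·log 0 = 0 and −log 0 = +∞). Equivalently, for any 0 ≤ u ≤ v, f(u) − f(v) ≤ −log(u/v). -/
lemma gan_aux_deriv (x : ℝ) (hx : 0 < x) :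
    HasDerivAt (fun t : ℝ => (1 + t) * (Real.log t - Real.log (1 + t)))
      (1 * (Real.log x - Real.log (1 + x)) + (1 + x) * (1/x - 1/(1 + x))) x := by
  have h1 : HasDerivAt (fun t : ℝ => 1 + t) 1 x := by
    simpa using (hasDerivAt_id x).const_add 1
  have h2 : HasDerivAt (fun t : ℝ => Real.log t - Real.log (1 + t)) (1/x - 1/(1+x)) x := by
    have hl1 : HasDerivAt Real.log (1/x) x := by
      simpa [one_div] using Real.hasDerivAt_log hx.ne'
    have hl2 : HasDerivAt (fun t : ℝ => Real.log (1 + t)) (1/(1+x)) x := by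
      have : HasDerivAt (fun t : ℝ => Real.log (1 + t)) ((1+x)⁻¹ * 1) x :=
        (Real.hasDerivAt_log (by linarith)).comp x h1
      simpa [one_div] using this
    exact hl1.sub hl2
  exact h1.mul h2

lemma gan_aux_mono :
    MonotoneOn (fun t : ℝ => (1 + t) * (Real.log t - Real.log (1 + t))) (Set.Ioi (0:ℝ)) := by
  have key : ∀ x ∈ interior (Set.Ioi (0:ℝ)),
      0 ≤ deriv (fun t : ℝ => (1 + t) * (Real.log t - Real.log (1 + t))) x := by
    intro x hx
    rw [interior_Ioi] at hx
    have hx' : (0:ℝ) < x := hx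
    rw [(gan_aux_deriv x hx').deriv]
    have hlog : Real.log (1 + x) - Real.log x ≤ 1/x := by
      rw [← Real.log_div (by linarith) hx'.ne']
      have := Real.log_le_sub_one_of_pos (show (0:ℝ) < (1+x)/x by positivity)
      have hdiv : (1+x)/x - 1 = 1/x := by field_simp; ring
      linarith [this, hdiv ▸ this]
    have hmul : (1 + x) * (1/x - 1/(1 + x)) = 1/x := by field_simp; ring
    rw [hmul]
    linarith
  apply monotoneOn_of_deriv_nonneg (convex_Ioi 0)
  · apply ContinuousOn.mul (by fun_prop)
    apply ContinuousOn.sub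
    · exact Real.continuousOn_log.mono (by intro x hx; exact ne_of_gt hx)
    · apply ContinuousOn.log (by fun_prop)
      intro x hx; have : (0:ℝ) < x := hx; intro h; linarith
  · intro x hx
    rw [interior_Ioi] at hx
    exact (gan_aux_deriv x hx).differentiableAt.differentiableWithinAt
  · exact key

/-- the GAN generator `f(z) = z log z − (1+z) log(1+z) + 2 log 2`
satisfies `f(εz) − f(z) ≤ −log ε` for all `ε ∈ (0,1]` and `z ≥ 0`; equivalently,
`f(u) − f(v) ≤ −log(u/v)` for all `0 < u ≤ v`. -/
theorem gan_generator_log_bound :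
    ∀ f : ℝ → ℝ,
      f = (fun z => z * Real.log z - (1 + z) * Real.log (1 + z) + 2 * Real.log 2) →
      (∀ ε ∈ Set.Ioc (0:ℝ) 1, ∀ z : ℝ, 0 ≤ z →
        f (ε * z) - f z ≤ - Real.log ε) ∧
      (∀ u v : ℝ, 0 < u → u ≤ v → f u - f v ≤ - Real.log (u / v)) := by
  intro f hf
  have main : ∀ u v : ℝ, 0 < u → u ≤ v → f u - f v ≤ - Real.log (u / v) := by
    intro u v hu huv
    have hv : 0 < v := lt_of_lt_of_le hu huv
    have hmono := gan_aux_mono (Set.mem_Ioi.mpr hu) (Set.mem_Ioi.mpr hv) huv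
    simp only at hmono
    rw [hf, Real.log_div hu.ne' hv.ne']
    simp only
    nlinarith [hmono]
  refine ⟨?_, main⟩
  intro ε hε z hz
  rcases eq_or_lt_of_le hz with hz0 | hz0
  · have hlog : Real.log ε ≤ 0 := Real.log_nonpos (le_of_lt hε.1) hε.2
    rw [← hz0]
    simp [hf]
    linarith
  · have := main (ε * z) z (mul_pos hε.1 hz0) (by nlinarith [hε.2])
    have heq : ε * z / z = ε := by field_simp
    rwa [heq] at this
end
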